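/- Let B = {(x, y) ∈ V ×_N V̇ : x = λ y for some λ ≥ 0}, where τ : V → N is a real vector bundle over a manifold N, V̇ = V \ 0_N is the complement of the zero section, and V ×_N V̇ is the fiber product. Then B is a closed subset of V ×_N V̇, and the map (V̇ × ℝ_{≥0}) → V ×_N V̇ sending (y, λ) ↦ (λy, y) is a homeomorphism onto B. -/

import Mathlib

/-!
In a linear local trivialization `e` the condition "`x = λ y` for some `λ ≥ 0`" on a pair over a
common base point becomes `SameRay ℝ u v` for `u = (e x).2`, `v = (e y).2`, i.e. the closed
condition `‖u‖ • v = ‖v‖ • u` in `F × F`; this gives closedness. On such pairs with `y ≠ 0` the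
coefficient is `λ = ‖u‖ / ‖v‖`, whatever the trivialization, so it depends continuously on the
pair, and `(x, y) ↦ (y, λ)` is a continuous left inverse of `(y, λ) ↦ (λ y, y)`.
-/

open Bundle Topology

theorem isClosed_setOf_sameRay {F : Type*} [NormedAddCommGroup F] [NormedSpace ℝ F] :
    IsClosed {p : F × F | SameRay ℝ p.1 p.2} := by
  simp_rw [sameRay_iff_norm_smul_eq]
  exact isClosed_eq (by fun_prop) (by fun_prop)

theorem Bundle.Trivialization.continuousAt_apply_snd {B F Z : Type*} [TopologicalSpace B]
    [TopologicalSpace F] [TopologicalSpace Z] {proj : Z → B} (e : Trivialization F proj) {z : Z}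
    (hz : proj z ∈ e.baseSet) : ContinuousAt (fun y => (e y).2) z :=
  (e.toOpenPartialHomeomorph.continuousAt (e.mem_source.2 hz)).snd

section FiberProduct

variable {B : Type*} (F : Type*) (E : B → Type*) [∀ b, AddCommGroup (E b)] [∀ b, Module ℝ (E b)]

/-- The fiber product `V ×_N V̇`. -/
def fiberProdNeZero : Set (TotalSpace F E × TotalSpace F E) :=
  {p | p.1.proj = p.2.proj ∧ p.2.snd ≠ 0}

def rayPairs : Set (TotalSpace F E × TotalSpace F E) :=
  {p | p.1.proj = p.2.proj ∧ p.2.snd ≠ 0 ∧ ∃ l : ℝ, 0 ≤ l ∧ HEq p.1.snd (l • p.2.snd)}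

def rayMap (q : {v : TotalSpace F E // v.snd ≠ 0} × {l : ℝ // 0 ≤ l}) :
    TotalSpace F E × TotalSpace F E :=
  (⟨q.1.1.proj, q.2.1 • q.1.1.snd⟩, q.1.1)

variable {F E}

theorem mk_mem_rayPairs_iff {b : B} {x y : E b} :
    ((⟨b, x⟩, ⟨b, y⟩) : TotalSpace F E × TotalSpace F E) ∈ rayPairs F E ↔
      y ≠ 0 ∧ SameRay ℝ x y := by
  refine and_iff_right_of_imp (fun _ => rfl) |>.trans (and_congr_right fun hy => ?_)
  simp only [heq_eq_eq, ← exists_nonneg_right_iff_sameRay hy]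

theorem range_rayMap : Set.range (rayMap F E) = rayPairs F E := by
  ext ⟨⟨b, x⟩, ⟨b', y⟩⟩
  constructor
  · rintro ⟨⟨⟨v, hv⟩, ⟨l, hl⟩⟩, hq⟩
    obtain ⟨rfl, rfl⟩ := hq
    exact ⟨rfl, hv, l, hl, HEq.rfl⟩
  · rintro ⟨hbb, hy, l, hl, hx⟩
    dsimp only at hbb hx
    subst hbb
    obtain rfl : x = l • y := eq_of_heq hx
    exact ⟨(⟨⟨b, y⟩, hy⟩, ⟨l, hl⟩), rfl⟩

end FiberProduct

section LinearTrivialization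

variable {B : Type*} [TopologicalSpace B] {F : Type*} [NormedAddCommGroup F] [NormedSpace ℝ F]
  {E : B → Type*} [∀ b, AddCommGroup (E b)] [∀ b, Module ℝ (E b)]
  [TopologicalSpace (TotalSpace F E)] (e : Trivialization F (π F E)) [e.IsLinear ℝ]

namespace Bundle.Trivialization

variable {b : B} (hb : b ∈ e.baseSet)
include hb

theorem apply_mk_smul_snd (l : ℝ) (y : E b) : (e ⟨b, l • y⟩).2 = l • (e ⟨b, y⟩).2 :=
  (e.linearEquivAt ℝ b hb).map_smul l y

theorem apply_mk_snd_ne_zero {y : E b} (hy : y ≠ 0) : (e ⟨b, y⟩).2 ≠ 0 :=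
  (e.linearEquivAt ℝ b hb).map_ne_zero_iff.2 hy

theorem sameRay_apply_mk_snd_iff {x y : E b} :
    SameRay ℝ (e ⟨b, x⟩).2 (e ⟨b, y⟩).2 ↔ SameRay ℝ x y :=
  SameRay.sameRay_map_iff (e.linearEquivAt ℝ b hb)

theorem norm_apply_mk_smul_snd_div {y : E b} (hy : y ≠ 0) {l : ℝ} (hl : 0 ≤ l) :
    ‖(e ⟨b, l • y⟩).2‖ / ‖(e ⟨b, y⟩).2‖ = l := by
  rw [e.apply_mk_smul_snd hb, norm_smul, Real.norm_of_nonneg hl,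
    mul_div_cancel_right₀ _ (norm_ne_zero_iff.2 (e.apply_mk_snd_ne_zero hb hy))]

end Bundle.Trivialization

theorem mem_rayPairs_iff_sameRay {p : TotalSpace F E × TotalSpace F E}
    (hp : p ∈ fiberProdNeZero F E) (hb : p.2.proj ∈ e.baseSet) :
    p ∈ rayPairs F E ↔ SameRay ℝ (e p.1).2 (e p.2).2 := by
  obtain ⟨⟨b, x⟩, ⟨b', y⟩⟩ := p
  obtain ⟨hbb, hy⟩ := hp
  dsimp only at hbb
  subst hbb
  rw [mk_mem_rayPairs_iff, e.sameRay_apply_mk_snd_iff hb]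
  exact and_iff_right hy

end LinearTrivialization

section VectorBundle

variable {B : Type*} [TopologicalSpace B] (F : Type*) [NormedAddCommGroup F] [NormedSpace ℝ F]
  (E : B → Type*) [∀ b, AddCommGroup (E b)] [∀ b, Module ℝ (E b)] [∀ b, TopologicalSpace (E b)]
  [TopologicalSpace (TotalSpace F E)] [FiberBundle F E] [VectorBundle ℝ F E]

theorem continuous_totalSpace_smul :
    Continuous fun p : ℝ × TotalSpace F E => (⟨p.2.proj, p.1 • p.2.snd⟩ : TotalSpace F E) := by
  refine continuous_iff_continuousAt.2 fun p₀ => ?_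
  rw [FiberBundle.continuousAt_totalSpace]
  refine ⟨((FiberBundle.continuous_proj F E).comp continuous_snd).continuousAt, ?_⟩
  set e := trivializationAt F E p₀.2.proj
  have hb₀ : p₀.2.proj ∈ e.baseSet := mem_baseSet_trivializationAt F E _
  have hlocal : ∀ᶠ p : ℝ × TotalSpace F E in 𝓝 p₀, p.2.proj ∈ e.baseSet :=
    ((FiberBundle.continuous_proj F E).comp continuous_snd).continuousAt.eventually_mem
      (e.open_baseSet.mem_nhds hb₀)
  refine (continuousAt_fst.smul ((e.continuousAt_apply_snd hb₀).comp continuousAt_snd)).congr ?_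
  filter_upwards [hlocal] with p hp
  exact (e.apply_mk_smul_snd hp p.1 p.2.snd).symm

/-- The coefficient `λ` of a pair `(λ y, y)`, read off in the trivialization at the base point. -/
noncomputable def rayCoeff (p : TotalSpace F E × TotalSpace F E) : ℝ :=
  ‖(trivializationAt F E p.2.proj p.1).2‖ / ‖(trivializationAt F E p.2.proj p.2).2‖

variable {F E}

theorem rayCoeff_eq (e : Trivialization F (π F E)) [e.IsLinear ℝ]
    {p : TotalSpace F E × TotalSpace F E} (hp : p ∈ rayPairs F E) (hb : p.2.proj ∈ e.baseSet) :
    rayCoeff F E p = ‖(e p.1).2‖ / ‖(e p.2).2‖ := by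
  obtain ⟨⟨b, x⟩, ⟨b', y⟩⟩ := p
  obtain ⟨hbb, hy, l, hl, hx⟩ := hp
  dsimp only at hbb hx
  subst hbb
  obtain rfl : x = l • y := eq_of_heq hx
  rw [rayCoeff, (trivializationAt F E b).norm_apply_mk_smul_snd_div
    (mem_baseSet_trivializationAt F E b) hy hl, e.norm_apply_mk_smul_snd_div hb hy hl]

theorem rayCoeff_rayMap (q : {v : TotalSpace F E // v.snd ≠ 0} × {l : ℝ // 0 ≤ l}) :
    rayCoeff F E (rayMap F E q) = q.2 :=
  (trivializationAt F E q.1.1.proj).norm_apply_mk_smul_snd_div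
    (mem_baseSet_trivializationAt F E _) q.1.2 q.2.2

theorem continuousOn_rayCoeff : ContinuousOn (rayCoeff F E) (rayPairs F E) := by
  intro p₀ hp₀
  set e := trivializationAt F E p₀.2.proj
  have hb₀ : p₀.2.proj ∈ e.baseSet := mem_baseSet_trivializationAt F E _
  have hb₀' : p₀.1.proj ∈ e.baseSet := hp₀.1 ▸ hb₀
  have hratio : ContinuousAt (fun p : TotalSpace F E × TotalSpace F E =>
      ‖(e p.1).2‖ / ‖(e p.2).2‖) p₀ :=
    ((e.continuousAt_apply_snd hb₀').comp continuousAt_fst).norm.div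
      ((e.continuousAt_apply_snd hb₀).comp continuousAt_snd).norm
      (norm_ne_zero_iff.2 (e.apply_mk_snd_ne_zero hb₀ hp₀.2.1))
  have hlocal : ∀ᶠ p : TotalSpace F E × TotalSpace F E in 𝓝 p₀, p.2.proj ∈ e.baseSet :=
    ((FiberBundle.continuous_proj F E).comp continuous_snd).continuousAt.eventually_mem
      (e.open_baseSet.mem_nhds hb₀)
  refine hratio.continuousWithinAt.congr_of_eventuallyEq ?_ (rayCoeff_eq e hp₀ hb₀)
  filter_upwards [nhdsWithin_le_nhds hlocal, self_mem_nhdsWithin] with p hp hpB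
  exact rayCoeff_eq e hpB hp

theorem isClosed_rayPairs :
    IsClosed {p : fiberProdNeZero F E | (p : TotalSpace F E × TotalSpace F E) ∈ rayPairs F E} := by
  refine isClosed_iff_frequently.2 fun p₀ hfreq => ?_
  set e := trivializationAt F E p₀.1.2.proj
  have hb₀ : p₀.1.2.proj ∈ e.baseSet := mem_baseSet_trivializationAt F E _
  have hb₀' : p₀.1.1.proj ∈ e.baseSet := p₀.2.1 ▸ hb₀
  have hlocal : ∀ᶠ p : fiberProdNeZero F E in 𝓝 p₀, p.1.2.proj ∈ e.baseSet :=
    ((FiberBundle.continuous_proj F E).comp continuous_subtype_val.snd).continuousAt.eventually_mem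
      (e.open_baseSet.mem_nhds hb₀)
  have hpair : ContinuousAt (fun p : fiberProdNeZero F E => ((e p.1.1).2, (e p.1.2).2)) p₀ :=
    ((e.continuousAt_apply_snd hb₀').comp (f := fun p : fiberProdNeZero F E => p.1.1)
      continuous_subtype_val.fst.continuousAt).prodMk
      ((e.continuousAt_apply_snd hb₀).comp (f := fun p : fiberProdNeZero F E => p.1.2)
        continuous_subtype_val.snd.continuousAt)
  refine (mem_rayPairs_iff_sameRay e p₀.2 hb₀).2 ?_
  refine isClosed_setOf_sameRay.mem_of_frequently_of_tendsto ?_ hpair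
  exact hfreq.mp (hlocal.mono fun p hp hpB => (mem_rayPairs_iff_sameRay e p.2 hp).1 hpB)

theorem isEmbedding_rayMap : IsEmbedding (rayMap F E) := by
  have hmaps : ∀ q, rayMap F E q ∈ rayPairs F E := Set.range_subset_iff.1 range_rayMap.subset
  have hcont : Continuous (rayMap F E) :=
    ((continuous_totalSpace_smul F E).comp
      ((continuous_subtype_val.comp continuous_snd).prodMk
        (continuous_subtype_val.comp continuous_fst))).prodMk
      (continuous_subtype_val.comp continuous_fst)
  let inv : rayPairs F E → {v : TotalSpace F E // v.snd ≠ 0} × {l : ℝ // 0 ≤ l} := fun p =>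
    (⟨p.1.2, p.2.2.1⟩, ⟨rayCoeff F E p, div_nonneg (norm_nonneg _) (norm_nonneg _)⟩)
  have hinv : Continuous inv :=
    ((continuous_snd.comp continuous_subtype_val).subtype_mk _).prodMk
      (continuousOn_rayCoeff.domRestrict.subtype_mk _)
  have hleft : Function.LeftInverse inv (Set.codRestrict (rayMap F E) _ hmaps) :=
    fun q => Prod.ext rfl (Subtype.ext (rayCoeff_rayMap q))
  exact IsEmbedding.subtypeVal.comp (hleft.isEmbedding hinv (hcont.codRestrict hmaps))

end VectorBundle

theorem stmt_7 {B : Type*} [TopologicalSpace B] (F : Type*) [NormedAddCommGroup F]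
    [NormedSpace ℝ F] (E : B → Type*) [∀ b, AddCommGroup (E b)] [∀ b, Module ℝ (E b)]
    [∀ b, TopologicalSpace (E b)] [TopologicalSpace (TotalSpace F E)]
    [FiberBundle F E] [VectorBundle ℝ F E] :
    let FP : Set (TotalSpace F E × TotalSpace F E) :=
      {p | p.1.proj = p.2.proj ∧ p.2.snd ≠ 0}
    let Bset : Set (TotalSpace F E × TotalSpace F E) :=
      {p | p.1.proj = p.2.proj ∧ p.2.snd ≠ 0 ∧ ∃ l : ℝ, 0 ≤ l ∧ HEq p.1.snd (l • p.2.snd)}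
    let Φ : {v : TotalSpace F E // v.snd ≠ 0} × {l : ℝ // 0 ≤ l} →
        TotalSpace F E × TotalSpace F E :=
      fun q => (TotalSpace.mk (q.1 : TotalSpace F E).proj
        ((q.2 : ℝ) • (q.1 : TotalSpace F E).snd), (q.1 : TotalSpace F E))
    IsClosed {p : FP | (p : TotalSpace F E × TotalSpace F E) ∈ Bset} ∧
      IsEmbedding Φ ∧ Set.range Φ = Bset :=
  ⟨isClosed_rayPairs, isEmbedding_rayMap, range_rayMap⟩
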